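/- Let α, β > 1, r, s ≥ 0, c ∈ {1/2, 1}, and let a, b : ℝ × [1,∞) → ℂ satisfy |a(k,t)| ≤ μ_{α,r}(k,t) and |b(k,t)| ≤ |κ(k)|^{−1} μ_{β,s}(k,t) for k ≠ 0. Then for every s′ with 0 ≤ s′ ≤ s there exists C such that for all k ∈ ℝ, t ≥ 1, |(a∗b)(k,t)| ≤ C ( max{t^{−s/2}, t^{−(r−c s′)}} μ_{β+c,s′}(k,t) + t^{−s/2} μ_{α,r}(k,t) ). -/

import Mathlib

open MeasureTheory

noncomputable def mu (α r k t : ℝ) : ℝ := 1 / (1 + (|k| * t ^ r) ^ α)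

noncomputable def kappa (k : ℝ) : ℂ := ((k : ℂ)^2 - Complex.I * k) ^ ((1:ℂ)/2)

noncomputable def conv (a b : ℝ → ℝ → ℂ) (k t : ℝ) : ℂ :=
  (1 / (2 * Real.pi) : ℝ) * ∫ k' : ℝ, a (k - k') t * b k' t

/-!
Since `|κ(k)|⁴ = k⁴ + k²`, one has `|b(k')| ≤ |k'|^(-e) μ_{β,s}(k')` for every `e ∈ [1/2, 1]`.
If `|k| t^{s'} ≤ 1`, then `μ_{β+c,s'}(k) ≥ 1/2` and the convolution is at most
`∫ |k'|^(-1/2) μ_{β,s}(k') dk' = t^(-s/2) ∫ |v|^(-1/2) (1 + |v|^β)⁻¹ dv`.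
Otherwise split at `|k'| = |k|/2`. On the inner part `μ_{α,r}(k-k') ≤ 2^α μ_{α,r}(k)`, which
gives the term `t^(-s/2) μ_{α,r}(k)`. On the outer part `|k'|^(-c) μ_{β,s}(k')` is at most
`2^(β+c) |k|^(-c) μ_{β,s}(k)`, and `∫ μ_{α,r} = t^(-r) ∫ (1 + |v|^α)⁻¹`; finally
`|k|^(-c) μ_{β,s}(k) ≤ t^(c s') μ_{β+c,s'}(k)` because `|k| t^{s'} ≥ 1` and `s' ≤ s`.
-/

open Real

lemma abs_rpow_le_norm_kappa {c : ℝ} (hc₁ : 1 / 2 ≤ c) (hc₂ : c ≤ 1) (k : ℝ) :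
    |k| ^ c ≤ ‖kappa k‖ := by
  set z : ℂ := (k : ℂ) ^ 2 - Complex.I * k
  have hnorm : ‖kappa k‖ = ‖z‖ ^ (1 / 2 : ℝ) := by
    rw [kappa, show (1 / 2 : ℂ) = ((1 / 2 : ℝ) : ℂ) by norm_num, Complex.norm_cpow_real]
  have hre : k ^ 2 ≤ ‖z‖ := by
    simpa [z, sq_abs, ← Complex.ofReal_pow] using Complex.abs_re_le_norm z
  have him : |k| ≤ ‖z‖ := by simpa [z, ← Complex.ofReal_pow] using Complex.abs_im_le_norm z
  rw [hnorm]
  rcases le_total |k| 1 with hk | hk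
  · calc |k| ^ c ≤ |k| ^ (1 / 2 : ℝ) :=
          rpow_le_rpow_of_exponent_ge' (abs_nonneg k) hk (by norm_num) hc₁
      _ ≤ ‖z‖ ^ (1 / 2 : ℝ) := by gcongr
  · calc |k| ^ c ≤ |k| := by simpa using rpow_le_rpow_of_exponent_le hk hc₂
      _ = (k ^ 2) ^ (1 / 2 : ℝ) := by rw [← sqrt_eq_rpow, sqrt_sq_eq_abs]
      _ ≤ ‖z‖ ^ (1 / 2 : ℝ) := by gcongr

lemma inv_norm_kappa_le {c : ℝ} (hc₁ : 1 / 2 ≤ c) (hc₂ : c ≤ 1) {k : ℝ} (hk : k ≠ 0) :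
    ‖kappa k‖⁻¹ ≤ |k| ^ (-c) := by
  rw [rpow_neg (abs_nonneg k)]
  exact inv_anti₀ (by positivity) (abs_rpow_le_norm_kappa hc₁ hc₂ k)

noncomputable def weight (α v : ℝ) : ℝ := (1 + |v| ^ α)⁻¹

lemma weight_pos (α v : ℝ) : 0 < weight α v := by unfold weight; positivity

lemma weight_le_one (α v : ℝ) : weight α v ≤ 1 :=
  inv_le_one_of_one_le₀ (le_add_of_nonneg_right (by positivity))

lemma one_le_two_mul_weight {α v : ℝ} (hα : 0 ≤ α) (hv : |v| ≤ 1) : 1 ≤ 2 * weight α v := by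
  have : |v| ^ α ≤ 1 := rpow_le_one (abs_nonneg v) hv hα
  rw [weight, ← div_eq_mul_inv, le_div_iff₀ (by positivity)]
  linarith

lemma weight_le_two_rpow_mul_weight {α v w : ℝ} (hα : 0 ≤ α) (h : |v| ≤ 2 * |w|) :
    weight α w ≤ 2 ^ α * weight α v := by
  have h₁ : (1 : ℝ) ≤ 2 ^ α := one_le_rpow one_le_two hα
  have h₂ : |v| ^ α ≤ 2 ^ α * |w| ^ α := by
    rw [← mul_rpow zero_le_two (abs_nonneg w)]; gcongr
  rw [weight, weight, ← div_eq_mul_inv, le_div_iff₀ (by positivity),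
    inv_mul_le_iff₀ (by positivity)]
  nlinarith

lemma weight_le_rpow_mul_one_add_rpow_neg {α : ℝ} (hα : 1 ≤ α) (v : ℝ) :
    weight α v ≤ 2 ^ (α - 1) * (1 + ‖v‖) ^ (-α) := by
  have h : (1 + |v|) ^ α ≤ 2 ^ (α - 1) * (1 + |v| ^ α) := by
    lift |v| to NNReal using abs_nonneg v with x
    have := NNReal.rpow_add_le_mul_rpow_add_rpow 1 x hα
    rw [NNReal.one_rpow] at this
    exact_mod_cast this
  rw [weight, Real.norm_eq_abs, rpow_neg (by positivity), ← div_eq_mul_inv,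
    le_div_iff₀ (by positivity), inv_mul_le_iff₀ (by positivity)]
  linarith

lemma continuous_weight {α : ℝ} (hα : 0 ≤ α) : Continuous (weight α) :=
  (continuous_const.add (continuous_abs.rpow_const fun _ => Or.inr hα)).inv₀
    fun v => (inv_pos.mp (weight_pos α v)).ne'

lemma integrable_weight {α : ℝ} (hα : 1 < α) : Integrable (weight α) := by
  refine ((integrable_one_add_norm (by simpa using hα)).const_mul (2 ^ (α - 1))).mono'
    (continuous_weight (by linarith)).aestronglyMeasurable (ae_of_all _ fun v => ?_)
  rw [Real.norm_of_nonneg (weight_pos α v).le]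
  exact weight_le_rpow_mul_one_add_rpow_neg hα.le v

lemma integrable_abs_rpow_neg_half_mul_weight {β : ℝ} (hβ : 1 < β) :
    Integrable fun v => |v| ^ (-(1 / 2) : ℝ) * weight β v := by
  have hnonneg (v : ℝ) : 0 ≤ |v| ^ (-(1 / 2) : ℝ) * weight β v :=
    mul_nonneg (by positivity) (weight_pos β v).le
  have hmeas : AEStronglyMeasurable fun v : ℝ => |v| ^ (-(1 / 2) : ℝ) * weight β v :=
    ((measurable_abs.pow_const _).mul
      (continuous_weight (by linarith)).measurable).aestronglyMeasurable
  have hloc : LocallyIntegrable fun v : ℝ => |v| ^ (-(1 / 2) : ℝ) * weight β v := by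
    refine locallyIntegrable_of_norm_le_rpow (by simp) (by norm_num : (1 / 2 : ℝ) < _)
      (C := 1) (ae_of_all _ fun v => ?_) hmeas
    rw [one_mul, Real.norm_of_nonneg (hnonneg v)]
    exact mul_le_of_le_one_right (by positivity) (weight_le_one β v)
  refine hloc.integrable_of_isBigO_cocompact (g := weight β) ?_
    ((integrable_weight hβ).integrableAtFilter _)
  refine Asymptotics.IsBigO.of_bound 1 ?_
  filter_upwards [isCompact_closedBall (0 : ℝ) 1 |>.compl_mem_cocompact] with v hv
  have hv : 1 ≤ |v| := (by simpa using hv : 1 < |v|).le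
  rw [one_mul, Real.norm_of_nonneg (weight_pos β v).le, Real.norm_of_nonneg (hnonneg v)]
  exact mul_le_of_le_one_left (weight_pos β v).le
    (rpow_le_one_of_one_le_of_nonpos hv (by norm_num))

section Mu

variable {α r k t : ℝ}

lemma mu_eq_weight (ht : 0 ≤ t) : mu α r k t = weight α (t ^ r * k) := by
  rw [mu, weight, one_div, abs_mul, abs_of_nonneg (rpow_nonneg ht r), mul_comm]

lemma mu_nonneg (ht : 0 ≤ t) : 0 ≤ mu α r k t :=
  (mu_eq_weight ht).symm ▸ (weight_pos α _).le

lemma mu_le_one (ht : 0 ≤ t) : mu α r k t ≤ 1 :=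
  (mu_eq_weight ht).symm ▸ weight_le_one α _

lemma one_le_two_mul_mu (hα : 0 ≤ α) (ht : 0 ≤ t) (hk : |k| * t ^ r ≤ 1) :
    1 ≤ 2 * mu α r k t := by
  rw [mu_eq_weight ht]
  refine one_le_two_mul_weight hα ?_
  rwa [abs_mul, abs_of_nonneg (rpow_nonneg ht r), mul_comm]

lemma mu_le_two_rpow_mul_mu (hα : 0 ≤ α) (ht : 0 ≤ t) {k' : ℝ} (h : |k| ≤ 2 * |k'|) :
    mu α r k' t ≤ 2 ^ α * mu α r k t := by
  rw [mu_eq_weight ht, mu_eq_weight ht]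
  refine weight_le_two_rpow_mul_weight hα ?_
  rw [abs_mul, abs_mul, mul_left_comm]
  exact mul_le_mul_of_nonneg_left h (abs_nonneg _)

lemma integrable_mu (hα : 1 < α) (ht : 0 < t) : Integrable fun u => mu α r u t := by
  simp_rw [mu_eq_weight ht.le]
  exact (integrable_weight hα).comp_mul_left' (rpow_pos_of_pos ht r).ne'

lemma integral_mu (ht : 0 < t) : ∫ u, mu α r u t = t ^ (-r) * ∫ v, weight α v := by
  simp_rw [mu_eq_weight ht.le]
  rw [Measure.integral_comp_mul_left (weight α), smul_eq_mul,
    abs_of_pos (inv_pos.mpr (rpow_pos_of_pos ht r)), rpow_neg ht.le]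

lemma abs_rpow_neg_half_mul_mu_eq (ht : 0 < t) (u : ℝ) :
    |u| ^ (-(1 / 2) : ℝ) * mu α r u t
      = t ^ (r / 2) * (|t ^ r * u| ^ (-(1 / 2) : ℝ) * weight α (t ^ r * u)) := by
  have hts : 0 < t ^ r := rpow_pos_of_pos ht r
  have hcancel : t ^ (r / 2) * (t ^ r) ^ (-(1 / 2) : ℝ) = 1 := by
    rw [← rpow_mul ht.le, ← rpow_add ht, show r / 2 + r * -(1 / 2) = 0 by ring, rpow_zero]
  rw [mu_eq_weight ht.le, abs_mul, abs_of_pos hts, mul_rpow hts.le (abs_nonneg u), ← mul_assoc,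
    ← mul_assoc, hcancel, one_mul]

lemma integrable_abs_rpow_neg_half_mul_mu (hα : 1 < α) (ht : 0 < t) :
    Integrable fun u => |u| ^ (-(1 / 2) : ℝ) * mu α r u t := by
  simp_rw [abs_rpow_neg_half_mul_mu_eq ht]
  exact ((integrable_abs_rpow_neg_half_mul_weight hα).comp_mul_left'
    (rpow_pos_of_pos ht r).ne').const_mul _

lemma integral_abs_rpow_neg_half_mul_mu (ht : 0 < t) :
    ∫ u, |u| ^ (-(1 / 2) : ℝ) * mu α r u t
      = t ^ (-(r / 2)) * ∫ v, |v| ^ (-(1 / 2) : ℝ) * weight α v := by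
  have hts : 0 < t ^ r := rpow_pos_of_pos ht r
  simp_rw [abs_rpow_neg_half_mul_mu_eq ht]
  rw [integral_const_mul, Measure.integral_comp_mul_left
    (fun v => |v| ^ (-(1 / 2) : ℝ) * weight α v), smul_eq_mul, abs_of_pos (inv_pos.mpr hts),
    ← mul_assoc, ← rpow_neg ht.le, ← rpow_add ht, show r / 2 + -r = -(r / 2) by ring]

end Mu

lemma rpow_neg_mul_inv_one_add_rpow_le {x X β c : ℝ} (hx : 1 ≤ x) (hxX : x ≤ X) (hβ : 0 ≤ β)
    (hc : 0 ≤ c) : x ^ (-c) * (1 + X ^ β)⁻¹ ≤ (1 + x ^ (β + c))⁻¹ := by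
  have hx₀ : 0 < x := by linarith
  have hexp : x ^ (-c) * (1 + x ^ (β + c)) = x ^ (-c) + x ^ β := by
    rw [mul_one_add, ← rpow_add hx₀, show -c + (β + c) = β by ring]
  have h₁ : x ^ (-c) ≤ 1 := rpow_le_one_of_one_le_of_nonpos hx (by linarith)
  have h₂ : x ^ β ≤ X ^ β := rpow_le_rpow hx₀.le hxX hβ
  have hX : 0 ≤ X := by linarith
  rw [mul_inv_le_iff₀ (by positivity), inv_mul_eq_div, le_div_iff₀ (by positivity), hexp]
  linarith

lemma abs_rpow_neg_mul_mu_le {β c s s' t k : ℝ} (hβ : 0 ≤ β) (hc : 0 ≤ c) (hs' : s' ≤ s)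
    (ht : 1 ≤ t) (hk : 1 ≤ |k| * t ^ s') :
    |k| ^ (-c) * mu β s k t ≤ t ^ (c * s') * mu (β + c) s' k t := by
  have ht₀ : 0 < t := by linarith
  have hsplit : |k| ^ (-c) = (|k| * t ^ s') ^ (-c) * t ^ (c * s') := by
    rw [mul_rpow (abs_nonneg k) (rpow_nonneg ht₀.le _), ← rpow_mul ht₀.le, mul_assoc,
      ← rpow_add ht₀, show s' * -c + c * s' = 0 by ring, rpow_zero, mul_one]
  have hle : |k| * t ^ s' ≤ |k| * t ^ s :=
    mul_le_mul_of_nonneg_left (rpow_le_rpow_of_exponent_le ht hs') (abs_nonneg k)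
  rw [hsplit, mu, mu, one_div, one_div, mul_right_comm, mul_comm (t ^ (c * s'))]
  exact mul_le_mul_of_nonneg_right (rpow_neg_mul_inv_one_add_rpow_le hk hle hβ hc)
    (rpow_nonneg ht₀.le _)

lemma norm_conv_le_integral {a b : ℝ → ℝ → ℂ} {k t : ℝ} {F : ℝ → ℝ} (hF : Integrable F)
    (h : ∀ᵐ k', ‖a (k - k') t * b k' t‖ ≤ F k') : ‖conv a b k t‖ ≤ ∫ k', F k' := by
  have hpi : |1 / (2 * π)| ≤ 1 := by
    rw [abs_of_pos (by positivity), div_le_one (by positivity)]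
    linarith [pi_gt_three]
  rw [conv, norm_mul, Complex.norm_real, Real.norm_eq_abs]
  exact (mul_le_of_le_one_left (norm_nonneg _) hpi).trans (norm_integral_le_of_norm_le hF h)

section Convolution

variable {α β r s : ℝ} {a b : ℝ → ℝ → ℂ}

lemma norm_integrand_le (ha : ∀ k t : ℝ, 1 ≤ t → ‖a k t‖ ≤ mu α r k t)
    (hb : ∀ k t : ℝ, k ≠ 0 → 1 ≤ t → ‖b k t‖ ≤ (‖kappa k‖)⁻¹ * mu β s k t)
    {e : ℝ} (he₁ : 1 / 2 ≤ e) (he₂ : e ≤ 1) {k k' t : ℝ} (hk' : k' ≠ 0) (ht : 1 ≤ t) :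
    ‖a (k - k') t * b k' t‖ ≤ mu α r (k - k') t * (|k'| ^ (-e) * mu β s k' t) := by
  rw [norm_mul]
  refine mul_le_mul (ha _ t ht) ((hb k' t hk' ht).trans ?_) (norm_nonneg _)
    (mu_nonneg (by linarith))
  exact mul_le_mul_of_nonneg_right (inv_norm_kappa_le he₁ he₂ hk') (mu_nonneg (by linarith))

lemma norm_conv_le_rpow_neg_half (hβ : 1 < β)
    (ha : ∀ k t : ℝ, 1 ≤ t → ‖a k t‖ ≤ mu α r k t)
    (hb : ∀ k t : ℝ, k ≠ 0 → 1 ≤ t → ‖b k t‖ ≤ (‖kappa k‖)⁻¹ * mu β s k t)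
    {k t : ℝ} (ht : 1 ≤ t) :
    ‖conv a b k t‖ ≤ t ^ (-(s / 2)) * ∫ v, |v| ^ (-(1 / 2) : ℝ) * weight β v := by
  have ht₀ : 0 < t := by linarith
  rw [← integral_abs_rpow_neg_half_mul_mu ht₀]
  refine norm_conv_le_integral (integrable_abs_rpow_neg_half_mul_mu hβ ht₀) ?_
  filter_upwards [Measure.ae_ne volume 0] with k' hk'
  refine (norm_integrand_le ha hb le_rfl (by norm_num) hk' ht).trans ?_
  exact mul_le_of_le_one_left (mul_nonneg (by positivity) (mu_nonneg ht₀.le)) (mu_le_one ht₀.le)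

lemma norm_integrand_le_near_add_far {c : ℝ} (hα : 0 ≤ α) (hβ : 0 ≤ β) (hc₁ : 1 / 2 ≤ c)
    (hc₂ : c ≤ 1) (ha : ∀ k t : ℝ, 1 ≤ t → ‖a k t‖ ≤ mu α r k t)
    (hb : ∀ k t : ℝ, k ≠ 0 → 1 ≤ t → ‖b k t‖ ≤ (‖kappa k‖)⁻¹ * mu β s k t)
    {k k' t : ℝ} (hk : k ≠ 0) (hk' : k' ≠ 0) (ht : 1 ≤ t) :
    ‖a (k - k') t * b k' t‖
      ≤ 2 ^ α * mu α r k t * (|k'| ^ (-(1 / 2) : ℝ) * mu β s k' t)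
        + 2 ^ β * 2 ^ c * |k| ^ (-c) * mu β s k t * mu α r (k - k') t := by
  have ht₀ : 0 ≤ t := by linarith
  have hnear_nonneg : 0 ≤ 2 ^ α * mu α r k t * (|k'| ^ (-(1 / 2) : ℝ) * mu β s k' t) := by
    have := mu_nonneg (α := α) (r := r) (k := k) ht₀
    have := mu_nonneg (α := β) (r := s) (k := k') ht₀
    positivity
  have hfar_nonneg : 0 ≤ 2 ^ β * 2 ^ c * |k| ^ (-c) * mu β s k t * mu α r (k - k') t := by
    have := mu_nonneg (α := β) (r := s) (k := k) ht₀
    have := mu_nonneg (α := α) (r := r) (k := k - k') ht₀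
    positivity
  rcases le_or_gt |k'| (|k| / 2) with hnear | hfar
  · refine ((norm_integrand_le ha hb le_rfl (by norm_num) hk' ht).trans ?_).trans
      (le_add_of_nonneg_right hfar_nonneg)
    refine mul_le_mul_of_nonneg_right (mu_le_two_rpow_mul_mu hα ht₀ ?_)
      (mul_nonneg (by positivity) (mu_nonneg ht₀))
    linarith [abs_sub_abs_le_abs_sub k k']
  · refine ((norm_integrand_le ha hb hc₁ hc₂ hk' ht).trans ?_).trans
      (le_add_of_nonneg_left hnear_nonneg)
    have hk₂ : 0 < |k| / 2 := by positivity
    have hweight : |k'| ^ (-c) ≤ 2 ^ c * |k| ^ (-c) := by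
      calc |k'| ^ (-c) ≤ (|k| / 2) ^ (-c) := rpow_le_rpow_of_nonpos hk₂ hfar.le (by linarith)
        _ = 2 ^ c * |k| ^ (-c) := by
          rw [div_rpow (abs_nonneg k) zero_le_two, rpow_neg zero_le_two, div_inv_eq_mul, mul_comm]
    have hmu : mu β s k' t ≤ 2 ^ β * mu β s k t := mu_le_two_rpow_mul_mu hβ ht₀ (by linarith)
    calc mu α r (k - k') t * (|k'| ^ (-c) * mu β s k' t)
        ≤ mu α r (k - k') t * ((2 ^ c * |k| ^ (-c)) * (2 ^ β * mu β s k t)) := by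
          gcongr
          · exact mu_nonneg ht₀
          · exact mu_nonneg ht₀
      _ = 2 ^ β * 2 ^ c * |k| ^ (-c) * mu β s k t * mu α r (k - k') t := by ring

lemma norm_conv_le_of_one_le_abs_mul_rpow {c s' : ℝ} (hα : 1 < α) (hβ : 1 < β)
    (hc₁ : 1 / 2 ≤ c) (hc₂ : c ≤ 1) (hs' : s' ≤ s)
    (ha : ∀ k t : ℝ, 1 ≤ t → ‖a k t‖ ≤ mu α r k t)
    (hb : ∀ k t : ℝ, k ≠ 0 → 1 ≤ t → ‖b k t‖ ≤ (‖kappa k‖)⁻¹ * mu β s k t)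
    {k t : ℝ} (ht : 1 ≤ t) (hk : 1 ≤ |k| * t ^ s') :
    ‖conv a b k t‖
      ≤ 2 ^ α * (∫ v, |v| ^ (-(1 / 2) : ℝ) * weight β v) * (t ^ (-(s / 2)) * mu α r k t)
        + 2 ^ β * 2 ^ c * (∫ v, weight α v) * (t ^ (-(r - c * s')) * mu (β + c) s' k t) := by
  have ht₀ : 0 < t := by linarith
  have hk₀ : k ≠ 0 := by
    rintro rfl
    norm_num at hk
  have hnear := (integrable_abs_rpow_neg_half_mul_mu (r := s) hβ ht₀).const_mul
    (2 ^ α * mu α r k t)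
  have hfar := ((integrable_mu (r := r) hα ht₀).comp_sub_left k).const_mul
    (2 ^ β * 2 ^ c * |k| ^ (-c) * mu β s k t)
  have hconv := norm_conv_le_integral (hnear.add hfar) <| by
    filter_upwards [Measure.ae_ne volume 0] with k' hk'
    exact norm_integrand_le_near_add_far (by linarith) (by linarith) hc₁ hc₂ ha hb hk₀ hk' ht
  rw [Pi.add_def, integral_add hnear hfar, integral_const_mul, integral_const_mul,
    integral_sub_left_eq_self (fun u => mu α r u t), integral_abs_rpow_neg_half_mul_mu ht₀,
    integral_mu ht₀] at hconv
  have hI : 0 ≤ ∫ v, weight α v := integral_nonneg fun v => (weight_pos α v).le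
  have hpow : t ^ (-r) * t ^ (c * s') = t ^ (-(r - c * s')) := by
    rw [← rpow_add ht₀, neg_sub, sub_eq_neg_add]
  calc ‖conv a b k t‖
      ≤ _ := hconv
    _ = 2 ^ α * (∫ v, |v| ^ (-(1 / 2) : ℝ) * weight β v) * (t ^ (-(s / 2)) * mu α r k t)
        + 2 ^ β * 2 ^ c * (∫ v, weight α v) * (t ^ (-r) * (|k| ^ (-c) * mu β s k t)) := by ring
    _ ≤ 2 ^ α * (∫ v, |v| ^ (-(1 / 2) : ℝ) * weight β v) * (t ^ (-(s / 2)) * mu α r k t)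
        + 2 ^ β * 2 ^ c * (∫ v, weight α v) * (t ^ (-r) * (t ^ (c * s') * mu (β + c) s' k t)) := by
      gcongr _ + _ * (_ * ?_)
      exact abs_rpow_neg_mul_mu_le (β := β) (c := c) (by linarith) (by linarith) hs' ht hk
    _ = _ := by rw [← mul_assoc (t ^ (-r)), hpow]

lemma norm_conv_le_of_abs_mul_rpow_le_one {c s' : ℝ} (hβ : 1 < β) (hc : 0 ≤ c)
    (ha : ∀ k t : ℝ, 1 ≤ t → ‖a k t‖ ≤ mu α r k t)
    (hb : ∀ k t : ℝ, k ≠ 0 → 1 ≤ t → ‖b k t‖ ≤ (‖kappa k‖)⁻¹ * mu β s k t)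
    {k t : ℝ} (ht : 1 ≤ t) (hk : |k| * t ^ s' ≤ 1) :
    ‖conv a b k t‖
      ≤ 2 * (∫ v, |v| ^ (-(1 / 2) : ℝ) * weight β v) * (t ^ (-(s / 2)) * mu (β + c) s' k t) := by
  have hJ : 0 ≤ ∫ v, |v| ^ (-(1 / 2) : ℝ) * weight β v :=
    integral_nonneg fun v => mul_nonneg (by positivity) (weight_pos β v).le
  have h2 : 1 ≤ 2 * mu (β + c) s' k t := one_le_two_mul_mu (by linarith) (by linarith) hk
  calc ‖conv a b k t‖
      ≤ t ^ (-(s / 2)) * ∫ v, |v| ^ (-(1 / 2) : ℝ) * weight β v :=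
        norm_conv_le_rpow_neg_half hβ ha hb ht
    _ ≤ (t ^ (-(s / 2)) * ∫ v, |v| ^ (-(1 / 2) : ℝ) * weight β v) * (2 * mu (β + c) s' k t) :=
        le_mul_of_one_le_right (by positivity) h2
    _ = _ := by ring

lemma norm_conv_le_max {c s' : ℝ} (hα : 1 < α) (hβ : 1 < β) (hc₁ : 1 / 2 ≤ c) (hc₂ : c ≤ 1)
    (hs' : s' ≤ s) (ha : ∀ k t : ℝ, 1 ≤ t → ‖a k t‖ ≤ mu α r k t)
    (hb : ∀ k t : ℝ, k ≠ 0 → 1 ≤ t → ‖b k t‖ ≤ (‖kappa k‖)⁻¹ * mu β s k t)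
    {k t : ℝ} (ht : 1 ≤ t) :
    ‖conv a b k t‖
      ≤ (2 * (∫ v, |v| ^ (-(1 / 2) : ℝ) * weight β v) + 2 ^ β * 2 ^ c * ∫ v, weight α v)
          * (max (t ^ (-(s / 2))) (t ^ (-(r - c * s'))) * mu (β + c) s' k t)
        + 2 ^ α * (∫ v, |v| ^ (-(1 / 2) : ℝ) * weight β v) * (t ^ (-(s / 2)) * mu α r k t) := by
  have ht₀ : 0 ≤ t := by linarith
  have hI : 0 ≤ ∫ v, weight α v := integral_nonneg fun v => (weight_pos α v).le
  have hJ : 0 ≤ ∫ v, |v| ^ (-(1 / 2) : ℝ) * weight β v :=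
    integral_nonneg fun v => mul_nonneg (by positivity) (weight_pos β v).le
  have hμ₁ : 0 ≤ mu (β + c) s' k t := mu_nonneg ht₀
  have hμ₂ : 0 ≤ mu α r k t := mu_nonneg ht₀
  have hM₁ := le_max_left (t ^ (-(s / 2))) (t ^ (-(r - c * s')))
  have hM₂ := le_max_right (t ^ (-(s / 2))) (t ^ (-(r - c * s')))
  rcases le_or_gt (|k| * t ^ s') 1 with hk | hk
  · refine (norm_conv_le_of_abs_mul_rpow_le_one (c := c) hβ (by linarith) ha hb ht hk).trans ?_
    refine le_add_of_le_of_nonneg ?_ (by positivity)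
    gcongr
    exact le_add_of_nonneg_right (by positivity)
  · refine (norm_conv_le_of_one_le_abs_mul_rpow hα hβ hc₁ hc₂ hs' ha hb ht hk.le).trans ?_
    rw [add_comm (2 ^ α * _ * _)]
    gcongr
    exact le_add_of_nonneg_left (by positivity)

end Convolution

theorem convolution_singular_bound_gain_general (α β r s c : ℝ) (hα : 1 < α) (hβ : 1 < β)
    (hc : c = 1/2 ∨ c = 1) (a b : ℝ → ℝ → ℂ)
    (ha : ∀ k t : ℝ, 1 ≤ t → ‖a k t‖ ≤ mu α r k t)
    (hb : ∀ k t : ℝ, k ≠ 0 → 1 ≤ t →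
      ‖b k t‖ ≤ (‖kappa k‖)⁻¹ * mu β s k t) :
    ∀ s' : ℝ, 0 ≤ s' → s' ≤ s →
      ∃ C : ℝ, ∀ k t : ℝ, 1 ≤ t →
        ‖conv a b k t‖
          ≤ C * (max (t ^ (-(s/2))) (t ^ (-(r - c * s'))) * mu (β + c) s' k t
                 + t ^ (-(s/2)) * mu α r k t) := by
  intro s' _ hs'
  obtain ⟨hc₁, hc₂⟩ : 1 / 2 ≤ c ∧ c ≤ 1 := by rcases hc with rfl | rfl <;> norm_num
  set I := ∫ v, weight α v
  set J := ∫ v, |v| ^ (-(1 / 2) : ℝ) * weight β v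
  have hI : 0 ≤ I := integral_nonneg fun v => (weight_pos α v).le
  have hJ : 0 ≤ J := integral_nonneg fun v => mul_nonneg (by positivity) (weight_pos β v).le
  refine ⟨2 * J + 2 ^ β * 2 ^ c * I + 2 ^ α * J, fun k t ht => ?_⟩
  have ht₀ : 0 ≤ t := by linarith
  have hP : 0 ≤ max (t ^ (-(s / 2))) (t ^ (-(r - c * s'))) * mu (β + c) s' k t :=
    mul_nonneg ((rpow_nonneg ht₀ _).trans (le_max_left _ _)) (mu_nonneg ht₀)
  have hQ : 0 ≤ t ^ (-(s / 2)) * mu α r k t := mul_nonneg (rpow_nonneg ht₀ _) (mu_nonneg ht₀)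
  have hA : 0 ≤ 2 * J + 2 ^ β * 2 ^ c * I := by positivity
  have hB : 0 ≤ 2 ^ α * J := by positivity
  refine (norm_conv_le_max hα hβ hc₁ hc₂ hs' ha hb ht).trans ?_
  nlinarith [mul_nonneg hA hQ, mul_nonneg hB hP]

theorem convolution_singular_bound_gain (α β r s c : ℝ) (hα : 1 < α) (hβ : 1 < β)
    (hr : 0 ≤ r) (hs : 0 ≤ s) (hc : c = 1/2 ∨ c = 1) (a b : ℝ → ℝ → ℂ)
    (ha : ∀ k t : ℝ, 1 ≤ t → ‖a k t‖ ≤ mu α r k t)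
    (hb : ∀ k t : ℝ, k ≠ 0 → 1 ≤ t →
      ‖b k t‖ ≤ (‖kappa k‖)⁻¹ * mu β s k t) :
    ∀ s' : ℝ, 0 ≤ s' → s' ≤ s →
      ∃ C : ℝ, ∀ k t : ℝ, 1 ≤ t →
        ‖conv a b k t‖
          ≤ C * (max (t ^ (-(s/2))) (t ^ (-(r - c * s'))) * mu (β + c) s' k t
                 + t ^ (-(s/2)) * mu α r k t) :=
  convolution_singular_bound_gain_general α β r s c hα hβ hc a b ha hb
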